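/- arXiv:0906.5553 — 2 statements merged into one kernel-verified Lean document; each statement's English description precedes it below -/
import Mathlib

section
/- Let k ≥ 2, let λ be a shape with at most k−1 rows, and let m ≥ 2. Then W_k^*(λ, m) = Σ_μ W_k^*(μ, m−1) − W_k^*(λ, m−2), where μ ranges over all shapes with at most k−1 rows such that either μ = λ or μ and λ differ by exactly one square (the subtracted term accounts for the forbidden continuation in which a square is added to and immediately removed from the first row). -/
/-- The empty shape (Ferrers diagram with no squares). -/
def emptyShape : ℕ → ℕ := fun _ => 0

/-- `f : ℕ → ℕ` represents a shape (integer partition / Ferrers diagram), recording the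
number of squares in each row (0-indexed): rows are weakly decreasing and eventually zero. -/
def IsShape (f : ℕ → ℕ) : Prop := (∀ i, f (i + 1) ≤ f i) ∧ ∃ N, f N = 0

/-- The shape `f` has at most `r` (nonzero) rows. -/
def RowsLE (r : ℕ) (f : ℕ → ℕ) : Prop := f r = 0

/-- `mu` is obtained from `lam` by adding one square in row `j` (0-indexed). -/
def AddSquareAt (j : ℕ) (lam mu : ℕ → ℕ) : Prop :=
  mu j = lam j + 1 ∧ ∀ i, i ≠ j → mu i = lam i

/-- `mu` is obtained from `lam` by adding one square. -/
def AddSquare (lam mu : ℕ → ℕ) : Prop := ∃ j, AddSquareAt j lam mu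

/-- `mu` and `lam` differ by exactly one square (added or removed). -/
def OscStep (lam mu : ℕ → ℕ) : Prop := AddSquare lam mu ∨ AddSquare mu lam

/-- `mu` is obtained from `lam` by adding one square, removing one square, or doing nothing. -/
def StarStep (lam mu : ℕ → ℕ) : Prop := mu = lam ∨ OscStep lam mu

/-- `t` encodes a `*`-tableaux of shape `lam` and length `m`, all of whose shapes have at
most `k - 1` rows: `t 0 = ∅`, `t m = lam`, consecutive shapes differ by at most one square,
and the sequence is padded by `lam` from index `m` on (so that `t` is determined by its
values `t 0, …, t m`). -/
def IsStarTab (k : ℕ) (lam : ℕ → ℕ) (m : ℕ) (t : ℕ → ℕ → ℕ) : Prop :=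
  t 0 = emptyShape ∧ (∀ i, m ≤ i → t i = lam) ∧
  (∀ i, i < m → StarStep (t i) (t (i + 1))) ∧
  ∀ i, IsShape (t i) ∧ RowsLE (k - 1) (t i)

/-- `t` encodes an oscillating tableaux: a `*`-tableaux whose consecutive shapes differ. -/
def IsOscTab (k : ℕ) (lam : ℕ → ℕ) (m : ℕ) (t : ℕ → ℕ → ℕ) : Prop :=
  IsStarTab k lam m t ∧ ∀ i, i < m → t (i + 1) ≠ t i

/-- `O_k^*(lam, m)`: the number of `*`-tableaux of shape `lam` and length `m`, all of whose
shapes have at most `k - 1` rows. -/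
noncomputable def Ostar (k : ℕ) (lam : ℕ → ℕ) (m : ℕ) : ℕ :=
  Nat.card {t : ℕ → ℕ → ℕ // IsStarTab k lam m t}

/-- `O_k^0(lam, m)`: the number of oscillating tableaux of shape `lam` and length `m`, all of
whose shapes have at most `k - 1` rows. -/
noncomputable def Oosc (k : ℕ) (lam : ℕ → ℕ) (m : ℕ) : ℕ :=
  Nat.card {t : ℕ → ℕ → ℕ // IsOscTab k lam m t}

/-- A `(+□₁, −□₁)`-pair at position `i` of a tableaux of length `m`: a square is added in the
first row and immediately removed again. -/
def PairAt (m : ℕ) (t : ℕ → ℕ → ℕ) (i : ℕ) : Prop :=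
  i + 2 ≤ m ∧ AddSquareAt 0 (t i) (t (i + 1)) ∧ t (i + 2) = t i

/-- `Q_k^*(lam, m, j)`: the number of `*`-tableaux of shape `lam` and length `m` with at most
`k - 1` rows containing exactly `j` `(+□₁, −□₁)`-pairs. -/
noncomputable def Qstar (k : ℕ) (lam : ℕ → ℕ) (m j : ℕ) : ℕ :=
  Nat.card {t : ℕ → ℕ → ℕ //
    IsStarTab k lam m t ∧ Nat.card {i : ℕ // PairAt m t i} = j}

/-- `W_k^*(lam, m)`: the number of `*`-tableaux of shape `lam` and length `m` with at most
`k - 1` rows containing no `(+□₁, −□₁)`-pair. -/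
noncomputable def Wstar (k : ℕ) (lam : ℕ → ℕ) (m : ℕ) : ℕ :=
  Nat.card {t : ℕ → ℕ → ℕ // IsStarTab k lam m t ∧ ∀ i, ¬ PairAt m t i}

/-- `M` is a partial matching on `[n] = {1, …, n}`: a set of arcs `(i, j)` with
`1 ≤ i < j ≤ n` such that every vertex lies in at most one arc. -/
def IsPartialMatching (n : ℕ) (M : Finset (ℕ × ℕ)) : Prop :=
  (∀ p ∈ M, 1 ≤ p.1 ∧ p.1 < p.2 ∧ p.2 ≤ n) ∧
  ∀ p ∈ M, ∀ q ∈ M, p ≠ q → p.1 ≠ q.1 ∧ p.1 ≠ q.2 ∧ p.2 ≠ q.1 ∧ p.2 ≠ q.2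

/-- `M` contains a `k`-crossing: arcs `(i₁,j₁), …, (i_k,j_k)` with
`i₁ < ⋯ < i_k < j₁ < ⋯ < j_k`. -/
def HasKCrossing (k : ℕ) (M : Finset (ℕ × ℕ)) : Prop :=
  ∃ a : Fin k → ℕ × ℕ, (∀ i, a i ∈ M) ∧
    (∀ i j, i < j → (a i).1 < (a j).1) ∧
    (∀ i j, i < j → (a i).2 < (a j).2) ∧
    ∀ i j, (a i).1 < (a j).2

/-- `M` is a `k`-noncrossing partial matching on `[n]`. -/
def KNoncrossingPM (k n : ℕ) (M : Finset (ℕ × ℕ)) : Prop :=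
  IsPartialMatching n M ∧ ¬ HasKCrossing k M

/-- `f_k^*(n)`: the number of `k`-noncrossing partial matchings on `[n]`. -/
noncomputable def fstar (k n : ℕ) : ℕ :=
  Nat.card {M : Finset (ℕ × ℕ) // KNoncrossingPM k n M}

/-- `M` is a matching on `[n]`: a partial matching in which every vertex lies in an arc. -/
def IsMatching (n : ℕ) (M : Finset (ℕ × ℕ)) : Prop :=
  IsPartialMatching n M ∧ ∀ v, 1 ≤ v → v ≤ n → ∃ p ∈ M, p.1 = v ∨ p.2 = v

/-- `f_k(n)`: the number of `k`-noncrossing matchings on `[n]`. -/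
noncomputable def fmatch (k n : ℕ) : ℕ :=
  Nat.card {M : Finset (ℕ × ℕ) // IsMatching n M ∧ ¬ HasKCrossing k M}

/-- `M` is a `k`-noncrossing RNA structure on `[n]`: a `k`-noncrossing partial matching
without `1`-arcs `(i, i+1)`. -/
def IsRNA (k n : ℕ) (M : Finset (ℕ × ℕ)) : Prop :=
  KNoncrossingPM k n M ∧ ∀ i, (i, i + 1) ∉ M

/-- `S_k(n)`: the number of `k`-noncrossing RNA structures on `[n]`. -/
noncomputable def Snum (k n : ℕ) : ℕ :=
  Nat.card {M : Finset (ℕ × ℕ) // IsRNA k n M}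

/-- `F(n, h)`: the number of `±1`-sequences of length `n` with all partial sums nonnegative
and total sum `h` (lattice paths from `(0,0)` to `(n,h)` staying in the first quadrant). -/
noncomputable def Fpath (n h : ℕ) : ℕ :=
  Nat.card {s : Fin n → ℤ // (∀ i, s i = 1 ∨ s i = -1) ∧
    (∀ m : ℕ, 0 ≤ ∑ i ∈ Finset.univ.filter (fun i : Fin n => (i : ℕ) < m), s i) ∧
    (∑ i, s i) = (h : ℤ)}

/-- The two-row shape `(x₁, x₂)`. -/
def twoRowShape (x1 x2 : ℕ) : ℕ → ℕ :=
  fun i => if i = 0 then x1 else if i = 1 then x2 else 0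

/-- Add one square to row `h` (0-indexed) of `f`. -/
def addRow (h : ℕ) (f : ℕ → ℕ) : ℕ → ℕ := fun i => if i = h then f i + 1 else f i

/-- Remove one square from row `h` (0-indexed) of `f`. -/
def subRow (h : ℕ) (f : ℕ → ℕ) : ℕ → ℕ := fun i => if i = h then f i - 1 else f i

/-- `V_k^*(ν, m) = W_k^*(ν, m) − W_k^*(ν⁻, m−1)`, where `ν⁻` is `ν` with one square removed
from the first row, and the second term is `0` if `ν` has an empty first row (invalid `ν⁻`). -/
noncomputable def Vstar (k : ℕ) (nu : ℕ → ℕ) (m : ℕ) : ℤ :=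
  (Wstar k nu m : ℤ) - if 0 < nu 0 then (Wstar k (subRow 0 nu) (m - 1) : ℤ) else 0

/-- The hyperbolic Bessel function of the first kind of order `r` evaluated at `2x`, as a
formal power series: `I_r(2x) = Σ_{j ≥ max(0,−r)} x^{2j+r}/(j!·(r+j)!)`. -/
noncomputable def besselI (r : ℤ) : PowerSeries ℚ :=
  PowerSeries.mk fun n =>
    if r.natAbs ≤ n ∧ (n : ℤ) % 2 = r % 2 then
      (1 : ℚ) / (((((n : ℤ) - r) / 2).toNat.factorial * ((((n : ℤ) + r) / 2).toNat.factorial) : ℕ) : ℚ)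
    else 0

/-! ### Auxiliary lemmas -/

lemma shape_zero_of_le {f : ℕ → ℕ} (hf : ∀ i, f (i + 1) ≤ f i) {r : ℕ} (h0 : f r = 0)
    {j : ℕ} (hj : r ≤ j) : f j = 0 := by
  have h : ∀ j, r ≤ j → f j ≤ f r := by
    intro j hj
    induction j, hj using Nat.le_induction with
    | base => exact le_rfl
    | succ n hn ih => exact le_trans (hf n) ih
  have := h j hj
  omega

lemma starStep_bound {a b : ℕ → ℕ} (h : StarStep a b) (j : ℕ) : b j ≤ a j + 1 := by
  rcases h with h | h | h
  · rw [h]; omega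
  · obtain ⟨j0, h1, h2⟩ := h
    by_cases hj : j = j0
    · subst hj; omega
    · rw [h2 j hj]; omega
  · obtain ⟨j0, h1, h2⟩ := h
    by_cases hj : j = j0
    · subst hj; omega
    · rw [h2 j hj]; omega

lemma tab_bound {k : ℕ} {lam : ℕ → ℕ} {m : ℕ} {t : ℕ → ℕ → ℕ}
    (ht : IsStarTab k lam m t) (i j : ℕ) : t i j ≤ i := by
  induction i with
  | zero => simp [ht.1, emptyShape]
  | succ n ih =>
    by_cases h : n < m
    · have := starStep_bound (ht.2.2.1 n h) j; omega
    · have h1 := ht.2.1 n (le_of_not_gt h)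
      have h2 := ht.2.1 (n + 1) (by omega)
      rw [h2, ← h1]; omega

lemma tab_rows {k : ℕ} {lam : ℕ → ℕ} {m : ℕ} {t : ℕ → ℕ → ℕ}
    (ht : IsStarTab k lam m t) (i j : ℕ) (hj : k - 1 ≤ j) : t i j = 0 :=
  shape_zero_of_le (ht.2.2.2 i).1.1 (ht.2.2.2 i).2 hj

lemma isStarTab_finite (k : ℕ) (lam : ℕ → ℕ) (m : ℕ) :
    Finite {t : ℕ → ℕ → ℕ // IsStarTab k lam m t} := by
  apply Finite.of_injective
    (fun t => (fun i : Fin (m + 1) => fun j : Fin k =>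
      (⟨t.1 i j, by have := tab_bound t.2 i j; omega⟩ : Fin (m + 1))))
  intro t s h
  apply Subtype.ext
  funext i j
  by_cases hj : j < k
  · by_cases hi : i ≤ m
    · have := congrFun (congrFun h ⟨i, by omega⟩) ⟨j, hj⟩
      simpa using this
    · rw [t.2.2.1 i (by omega), s.2.2.1 i (by omega)]
  · have hj' : k - 1 ≤ j := by omega
    rw [tab_rows t.2 i j hj', tab_rows s.2 i j hj']

/-- Truncate a tableau at length `n`. -/
def WTrunc (n : ℕ) (t : ℕ → ℕ → ℕ) : ℕ → ℕ → ℕ := fun i => t (min i n)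

/-- Extend a tableau of length `n` by one final shape `f`. -/
def WSnoc (n : ℕ) (t : ℕ → ℕ → ℕ) (f : ℕ → ℕ) : ℕ → ℕ → ℕ := fun i => if i ≤ n then t i else f

lemma WTrunc_le {n i : ℕ} (h : i ≤ n) (t : ℕ → ℕ → ℕ) : WTrunc n t i = t i := by
  simp [WTrunc, Nat.min_eq_left h]

lemma WTrunc_ge {n i : ℕ} (h : n ≤ i) (t : ℕ → ℕ → ℕ) : WTrunc n t i = t n := by
  simp [WTrunc, Nat.min_eq_right h]

lemma WSnoc_le {n i : ℕ} (h : i ≤ n) (t : ℕ → ℕ → ℕ) (f : ℕ → ℕ) : WSnoc n t f i = t i := by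
  simp [WSnoc, h]

lemma WSnoc_gt {n i : ℕ} (h : n < i) (t : ℕ → ℕ → ℕ) (f : ℕ → ℕ) : WSnoc n t f i = f := by
  simp [WSnoc, Nat.not_le.mpr h]

lemma addRow_same (j : ℕ) (f : ℕ → ℕ) : addRow j f j = f j + 1 := by simp [addRow]

lemma addRow_other {i j : ℕ} (h : i ≠ j) (f : ℕ → ℕ) : addRow j f i = f i := by
  simp [addRow, h]

lemma subRow_same (j : ℕ) (f : ℕ → ℕ) : subRow j f j = f j - 1 := by simp [subRow]

lemma subRow_other {i j : ℕ} (h : i ≠ j) (f : ℕ → ℕ) : subRow j f i = f i := by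
  simp [subRow, h]

lemma nopair_finite (k : ℕ) (lam : ℕ → ℕ) (m : ℕ) :
    Finite {t : ℕ → ℕ → ℕ // IsStarTab k lam m t ∧ ∀ i, ¬ PairAt m t i} := by
  have := isStarTab_finite k lam m
  apply Finite.of_injective
    (fun x => (⟨x.1, x.2.1⟩ : {t : ℕ → ℕ → ℕ // IsStarTab k lam m t}))
  intro a b h
  simp only [Subtype.mk.injEq] at h
  exact Subtype.ext h

lemma muSet_finite (k : ℕ) (lam : ℕ → ℕ) (hlam : IsShape lam) (hrow : RowsLE (k - 1) lam) :
    {mu : ℕ → ℕ | IsShape mu ∧ RowsLE (k - 1) mu ∧ (mu = lam ∨ OscStep lam mu)}.Finite := by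
  apply Set.Finite.subset (s := ({lam} ∪ (fun j => addRow j lam) '' Set.Iio k
    ∪ (fun j => subRow j lam) '' Set.Iio k : Set (ℕ → ℕ)))
  · exact ((Set.finite_singleton _).union ((Set.finite_Iio _).image _)).union
      ((Set.finite_Iio _).image _)
  · rintro mu ⟨hsh, hr, h | h⟩
    · exact Or.inl (Or.inl h)
    · rcases h with ⟨j, h1, h2⟩ | ⟨j, h1, h2⟩
      · refine Or.inl (Or.inr ⟨j, Set.mem_Iio.mpr ?_, ?_⟩)
        · by_contra hj
          have h0 : mu j = 0 := shape_zero_of_le hsh.1 hr (by omega)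
          omega
        · funext i
          show addRow j lam i = mu i
          by_cases hij : i = j
          · subst hij; rw [addRow_same]; omega
          · rw [addRow_other hij]; exact (h2 i hij).symm
      · refine Or.inr ⟨j, Set.mem_Iio.mpr ?_, ?_⟩
        · by_contra hj
          have h0 : lam j = 0 := shape_zero_of_le hlam.1 hrow (by omega)
          omega
        · funext i
          show subRow j lam i = mu i
          by_cases hij : i = j
          · subst hij; rw [subRow_same]; omega
          · rw [subRow_other hij]; exact h2 i hij

lemma trunc_isStarTab {k : ℕ} {lam : ℕ → ℕ} {m : ℕ} {t : ℕ → ℕ → ℕ}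
    (ht : IsStarTab k lam m t) (n : ℕ) : IsStarTab k (t n) n (WTrunc n t) := by
  refine ⟨?_, ?_, ?_, ?_⟩
  · rw [WTrunc_le (Nat.zero_le n), ht.1]
  · intro i hi; rw [WTrunc_ge hi]
  · intro i hi
    rw [WTrunc_le (by omega), WTrunc_le (by omega)]
    by_cases him : i < m
    · exact ht.2.2.1 i him
    · rw [ht.2.1 i (by omega), ht.2.1 (i + 1) (by omega)]
      exact Or.inl rfl
  · intro i; exact ht.2.2.2 (min i n)

lemma snoc_isStarTab {k : ℕ} {lam : ℕ → ℕ} {n : ℕ} {t : ℕ → ℕ → ℕ} {f : ℕ → ℕ}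
    (ht : IsStarTab k lam n t) (hstep : StarStep lam f)
    (hf : IsShape f) (hfr : RowsLE (k - 1) f) : IsStarTab k f (n + 1) (WSnoc n t f) := by
  refine ⟨?_, ?_, ?_, ?_⟩
  · rw [WSnoc_le (Nat.zero_le n), ht.1]
  · intro i hi; rw [WSnoc_gt (by omega)]
  · intro i hi
    by_cases hin : i < n
    · rw [WSnoc_le (by omega), WSnoc_le (by omega)]
      exact ht.2.2.1 i hin
    · have hin' : i = n := by omega
      subst hin'
      rw [WSnoc_le le_rfl, WSnoc_gt (by omega), ht.2.1 i le_rfl]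
      exact hstep
  · intro i
    by_cases hin : i ≤ n
    · rw [WSnoc_le hin]; exact ht.2.2.2 i
    · rw [WSnoc_gt (by omega)]; exact ⟨hf, hfr⟩

lemma addRow_zero_shape {lam : ℕ → ℕ} (hlam : IsShape lam) {k : ℕ} (hk : 2 ≤ k)
    (hrow : RowsLE (k - 1) lam) :
    IsShape (addRow 0 lam) ∧ RowsLE (k - 1) (addRow 0 lam) ∧ AddSquareAt 0 lam (addRow 0 lam) := by
  refine ⟨⟨?_, ⟨k - 1, ?_⟩⟩, ?_, ?_, ?_⟩
  · intro i
    rcases Nat.eq_zero_or_pos i with h | h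
    · subst h
      show addRow 0 lam 1 ≤ addRow 0 lam 0
      rw [addRow_other one_ne_zero, addRow_same]
      exact le_trans (hlam.1 0) (Nat.le_succ _)
    · rw [addRow_other (by omega), addRow_other (by omega)]
      exact hlam.1 i
  · rw [addRow_other (by omega)]; exact hrow
  · show addRow 0 lam (k - 1) = 0
    rw [addRow_other (by omega)]; exact hrow
  · exact addRow_same 0 lam
  · intro i hi; exact addRow_other hi lam

lemma wstar_key (k : ℕ) (hk : 2 ≤ k) (lam : ℕ → ℕ) (hlam : IsShape lam)
    (hrow : RowsLE (k - 1) lam) (m : ℕ) (hm : 2 ≤ m) :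
    Wstar k lam m + Wstar k lam (m - 2) =
      Nat.card {p : (ℕ → ℕ) × (ℕ → ℕ → ℕ) //
        (IsShape p.1 ∧ RowsLE (k - 1) p.1 ∧ (p.1 = lam ∨ OscStep lam p.1)) ∧
        IsStarTab k p.1 (m - 1) p.2 ∧ ∀ i, ¬ PairAt (m - 1) p.2 i} := by
  classical
  obtain ⟨hl'sh, hl'row, hl'add⟩ := addRow_zero_shape hlam hk hrow
  haveI hA : Finite {t : ℕ → ℕ → ℕ // IsStarTab k lam m t ∧ ∀ i, ¬ PairAt m t i} :=
    nopair_finite k lam m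
  haveI hB : Finite {t : ℕ → ℕ → ℕ // IsStarTab k lam (m - 2) t ∧ ∀ i, ¬ PairAt (m - 2) t i} :=
    nopair_finite k lam (m - 2)
  unfold Wstar
  rw [← Nat.card_sum]
  -- properties of the truncation of a length-m tableau
  have hprop1 : ∀ t : {t : ℕ → ℕ → ℕ // IsStarTab k lam m t ∧ ∀ i, ¬ PairAt m t i},
      (IsShape (t.1 (m - 1)) ∧ RowsLE (k - 1) (t.1 (m - 1)) ∧
        (t.1 (m - 1) = lam ∨ OscStep lam (t.1 (m - 1)))) ∧
      IsStarTab k (t.1 (m - 1)) (m - 1) (WTrunc (m - 1) t.1) ∧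
      ∀ i, ¬ PairAt (m - 1) (WTrunc (m - 1) t.1) i := by
    intro t
    refine ⟨⟨(t.2.1.2.2.2 (m - 1)).1, (t.2.1.2.2.2 (m - 1)).2, ?_⟩,
      trunc_isStarTab t.2.1 (m - 1), ?_⟩
    · have hst := t.2.1.2.2.1 (m - 1) (by omega)
      rw [show m - 1 + 1 = m from by omega, t.2.1.2.1 m le_rfl] at hst
      rcases hst with h | h | h
      · exact Or.inl h.symm
      · exact Or.inr (Or.inr h)
      · exact Or.inr (Or.inl h)
    · rintro i ⟨h2, hadd, heq⟩
      apply t.2.2 i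
      rw [WTrunc_le (show i ≤ m - 1 from by omega),
        WTrunc_le (show i + 1 ≤ m - 1 from by omega)] at hadd
      rw [WTrunc_le (show i + 2 ≤ m - 1 from by omega),
        WTrunc_le (show i ≤ m - 1 from by omega)] at heq
      exact ⟨by omega, hadd, heq⟩
  -- properties of the extension of a length-(m-2) tableau
  have hprop2 : ∀ s : {t : ℕ → ℕ → ℕ // IsStarTab k lam (m - 2) t ∧
        ∀ i, ¬ PairAt (m - 2) t i},
      (IsShape (addRow 0 lam) ∧ RowsLE (k - 1) (addRow 0 lam) ∧
        (addRow 0 lam = lam ∨ OscStep lam (addRow 0 lam))) ∧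
      IsStarTab k (addRow 0 lam) (m - 1) (WSnoc (m - 2) s.1 (addRow 0 lam)) ∧
      ∀ i, ¬ PairAt (m - 1) (WSnoc (m - 2) s.1 (addRow 0 lam)) i := by
    intro s
    have hstep : StarStep lam (addRow 0 lam) := Or.inr (Or.inl ⟨0, hl'add⟩)
    refine ⟨⟨hl'sh, hl'row, Or.inr (Or.inl ⟨0, hl'add⟩)⟩, ?_, ?_⟩
    · have := snoc_isStarTab s.2.1 hstep hl'sh hl'row
      rwa [show m - 2 + 1 = m - 1 from by omega] at this
    · rintro i ⟨h2, hadd, heq⟩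
      by_cases hc : i + 2 ≤ m - 2
      · apply s.2.2 i
        rw [WSnoc_le (show i ≤ m - 2 from by omega),
          WSnoc_le (show i + 1 ≤ m - 2 from by omega)] at hadd
        rw [WSnoc_le (show i + 2 ≤ m - 2 from by omega),
          WSnoc_le (show i ≤ m - 2 from by omega)] at heq
        exact ⟨by omega, hadd, heq⟩
      · have hieq : i + 2 = m - 1 := by omega
        rw [WSnoc_gt (show m - 2 < i + 2 from by omega),
          WSnoc_le (show i ≤ m - 2 from by omega)] at heq
        rw [WSnoc_le (show i ≤ m - 2 from by omega),
          WSnoc_le (show i + 1 ≤ m - 2 from by omega)] at hadd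
        have hpad : s.1 (i + 1) = lam := s.2.1.2.1 (i + 1) (by omega)
        have h1 := hadd.1
        rw [hpad, ← heq] at h1
        have h3 := hl'add.1
        omega
  -- the bijection
  apply Nat.card_congr
  apply Equiv.ofBijective (Sum.elim
    (fun t => ⟨(t.1 (m - 1), WTrunc (m - 1) t.1), hprop1 t⟩)
    (fun s => ⟨(addRow 0 lam, WSnoc (m - 2) s.1 (addRow 0 lam)), hprop2 s⟩))
  constructor
  · rintro (t1 | s1) (t2 | s2) h <;>
      simp only [Sum.elim_inl, Sum.elim_inr, Subtype.mk.injEq, Prod.mk.injEq] at h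
    · -- inl / inl
      congr 1
      apply Subtype.ext
      funext i
      by_cases hi : i ≤ m - 1
      · have := congrFun h.2 i
        rwa [WTrunc_le hi, WTrunc_le hi] at this
      · rw [t1.2.1.2.1 i (by omega), t2.2.1.2.1 i (by omega)]
    · -- inl / inr : impossible
      exfalso
      apply t1.2.2 (m - 2)
      have e1 : t1.1 (m - 2) = lam := by
        have h1 := congrFun h.2 (m - 2)
        rw [WTrunc_le (show m - 2 ≤ m - 1 from by omega),
          WSnoc_le le_rfl] at h1
        rw [h1, s2.2.1.2.1 (m - 2) le_rfl]
      refine ⟨by omega, ?_, ?_⟩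
      · rw [e1, show m - 2 + 1 = m - 1 from by omega, h.1]
        exact hl'add
      · rw [show m - 2 + 2 = m from by omega, t1.2.1.2.1 m le_rfl, e1]
    · -- inr / inl : impossible
      exfalso
      apply t2.2.2 (m - 2)
      have e1 : t2.1 (m - 2) = lam := by
        have h1 := congrFun h.2 (m - 2)
        rw [WTrunc_le (show m - 2 ≤ m - 1 from by omega),
          WSnoc_le le_rfl] at h1
        rw [← h1, s1.2.1.2.1 (m - 2) le_rfl]
      refine ⟨by omega, ?_, ?_⟩
      · rw [e1, show m - 2 + 1 = m - 1 from by omega, ← h.1]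
        exact hl'add
      · rw [show m - 2 + 2 = m from by omega, t2.2.1.2.1 m le_rfl, e1]
    · -- inr / inr
      congr 1
      apply Subtype.ext
      funext i
      by_cases hi : i ≤ m - 2
      · have := congrFun h.2 i
        rwa [WSnoc_le hi, WSnoc_le hi] at this
      · rw [s1.2.1.2.1 i (by omega), s2.2.1.2.1 i (by omega)]
  · rintro ⟨⟨mu, t'⟩, ⟨hmush, hmurow, hmuor⟩, ht', hnp⟩
    dsimp only at hmush hmurow hmuor ht' hnp
    by_cases hc : AddSquareAt 0 lam mu ∧ t' (m - 2) = lam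
    · -- comes from an extension
      have hmu' : addRow 0 lam = mu := by
        funext i
        by_cases hi : i = 0
        · subst hi; rw [addRow_same]; exact hc.1.1.symm
        · rw [addRow_other hi]; exact (hc.1.2 i hi).symm
      refine ⟨Sum.inr ⟨WTrunc (m - 2) t', ?_, ?_⟩, ?_⟩
      · have := trunc_isStarTab ht' (m - 2)
        rwa [hc.2] at this
      · rintro i ⟨h2, hadd, heq⟩
        apply hnp i
        rw [WTrunc_le (show i ≤ m - 2 from by omega),
          WTrunc_le (show i + 1 ≤ m - 2 from by omega)] at hadd
        rw [WTrunc_le (show i + 2 ≤ m - 2 from by omega),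
          WTrunc_le (show i ≤ m - 2 from by omega)] at heq
        exact ⟨by omega, hadd, heq⟩
      · apply Subtype.ext
        show (addRow 0 lam, WSnoc (m - 2) (WTrunc (m - 2) t') (addRow 0 lam)) = (mu, t')
        rw [Prod.mk.injEq]
        refine ⟨hmu', ?_⟩
        funext i
        by_cases hi : i ≤ m - 2
        · rw [WSnoc_le hi, WTrunc_le hi]
        · rw [WSnoc_gt (by omega), hmu', ht'.2.1 i (by omega)]
    · -- comes from a truncation
      have hstep : StarStep mu lam := by
        rcases hmuor with h | h | h
        · exact Or.inl h.symm
        · exact Or.inr (Or.inr h)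
        · exact Or.inr (Or.inl h)
      refine ⟨Sum.inl ⟨WSnoc (m - 1) t' lam, ?_, ?_⟩, ?_⟩
      · have := snoc_isStarTab ht' hstep hlam hrow
        rwa [show m - 1 + 1 = m from by omega] at this
      · rintro i ⟨h2, hadd, heq⟩
        by_cases hcc : i + 2 ≤ m - 1
        · apply hnp i
          rw [WSnoc_le (show i ≤ m - 1 from by omega),
            WSnoc_le (show i + 1 ≤ m - 1 from by omega)] at hadd
          rw [WSnoc_le (show i + 2 ≤ m - 1 from by omega),
            WSnoc_le (show i ≤ m - 1 from by omega)] at heq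
          exact ⟨by omega, hadd, heq⟩
        · apply hc
          rw [WSnoc_gt (show m - 1 < i + 2 from by omega),
            WSnoc_le (show i ≤ m - 1 from by omega)] at heq
          rw [WSnoc_le (show i ≤ m - 1 from by omega),
            WSnoc_le (show i + 1 ≤ m - 1 from by omega)] at hadd
          have hi : i = m - 2 := by omega
          subst hi
          have hp : t' (m - 2 + 1) = mu := ht'.2.1 _ (by omega)
          rw [hp, ← heq] at hadd
          exact ⟨hadd, heq.symm⟩
      · apply Subtype.ext
        show (WSnoc (m - 1) t' lam (m - 1), WTrunc (m - 1) (WSnoc (m - 1) t' lam)) = (mu, t')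
        rw [Prod.mk.injEq]
        constructor
        · rw [WSnoc_le le_rfl]; exact ht'.2.1 (m - 1) le_rfl
        · funext i
          by_cases hi : i ≤ m - 1
          · rw [WTrunc_le hi, WSnoc_le hi]
          · rw [WTrunc_ge (by omega), WSnoc_le le_rfl, ht'.2.1 (m - 1) le_rfl,
              ht'.2.1 i (by omega)]

lemma card_pairs_eq_sum (k : ℕ) (lam : ℕ → ℕ) (hlam : IsShape lam)
    (hrow : RowsLE (k - 1) lam) (n : ℕ) :
    Nat.card {p : (ℕ → ℕ) × (ℕ → ℕ → ℕ) //
        (IsShape p.1 ∧ RowsLE (k - 1) p.1 ∧ (p.1 = lam ∨ OscStep lam p.1)) ∧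
        IsStarTab k p.1 n p.2 ∧ ∀ i, ¬ PairAt n p.2 i} =
      ∑ mu ∈ (muSet_finite k lam hlam hrow).toFinset, Wstar k mu n := by
  classical
  have hS := muSet_finite k lam hlam hrow
  haveI : ∀ mu : {x // x ∈ hS.toFinset},
      Finite {t : ℕ → ℕ → ℕ // IsStarTab k mu.1 n t ∧ ∀ i, ¬ PairAt n t i} :=
    fun mu => nopair_finite k mu.1 n
  haveI : ∀ mu : {x // x ∈ hS.toFinset},
      Fintype {t : ℕ → ℕ → ℕ // IsStarTab k mu.1 n t ∧ ∀ i, ¬ PairAt n t i} :=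
    fun mu => Fintype.ofFinite _
  have e : {p : (ℕ → ℕ) × (ℕ → ℕ → ℕ) //
        (IsShape p.1 ∧ RowsLE (k - 1) p.1 ∧ (p.1 = lam ∨ OscStep lam p.1)) ∧
        IsStarTab k p.1 n p.2 ∧ ∀ i, ¬ PairAt n p.2 i} ≃
      Σ mu : {x // x ∈ hS.toFinset},
        {t : ℕ → ℕ → ℕ // IsStarTab k mu.1 n t ∧ ∀ i, ¬ PairAt n t i} :=
    { toFun := fun x => ⟨⟨x.1.1, hS.mem_toFinset.mpr x.2.1⟩, ⟨x.1.2, x.2.2⟩⟩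
      invFun := fun y => ⟨(y.1.1, y.2.1), ⟨hS.mem_toFinset.mp y.1.2, y.2.2⟩⟩
      left_inv := fun x => rfl
      right_inv := fun y => rfl }
  rw [Nat.card_congr e, Nat.card_eq_fintype_card, Fintype.card_sigma]
  rw [← Finset.sum_coe_sort hS.toFinset (fun mu => Wstar k mu n)]
  congr 1
  funext mu
  rw [Wstar, Nat.card_eq_fintype_card]


/-- `W_k^*(λ, m) = Σ_μ W_k^*(μ, m−1) − W_k^*(λ, m−2)`, where `μ` ranges over all
shapes with at most `k−1` rows with `μ = λ` or differing from `λ` by exactly one square. -/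
theorem Wstar_rec (k : ℕ) (hk : 2 ≤ k) (lam : ℕ → ℕ) (hlam : IsShape lam)
    (hrow : RowsLE (k - 1) lam) (m : ℕ) (hm : 2 ≤ m) :
    (Wstar k lam m : ℤ) =
      (∑ᶠ mu ∈ {mu : ℕ → ℕ | IsShape mu ∧ RowsLE (k - 1) mu ∧
          (mu = lam ∨ OscStep lam mu)}, (Wstar k mu (m - 1) : ℤ))
        - (Wstar k lam (m - 2) : ℤ) := by
  
  have hS := muSet_finite k lam hlam hrow
  have hkey := wstar_key k hk lam hlam hrow m hm
  rw [card_pairs_eq_sum k lam hlam hrow (m - 1)] at hkey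
  have hfin : ∑ᶠ mu ∈ {mu : ℕ → ℕ | IsShape mu ∧ RowsLE (k - 1) mu ∧
      (mu = lam ∨ OscStep lam mu)}, (Wstar k mu (m - 1) : ℤ) =
      ∑ mu ∈ hS.toFinset, (Wstar k mu (m - 1) : ℤ) := by
    rw [← finsum_mem_coe_finset, Set.Finite.coe_toFinset]
  rw [hfin]
  have hc := congrArg (Nat.cast : ℕ → ℤ) hkey
  push_cast at hc
  linarith [hc]
end

section
/- Let k ≥ 3, let λ be a shape with at most k−1 rows, let μ be the shape obtained from λ by adding one square in the first row, and for any shape ν with at most k−1 rows and any length m define V_k^*(ν, m) = W_k^*(ν, m) − W_k^*(ν⁻, m−1), where ν⁻ is ν with one square removed from the first row (and W_k^* of an invalid argument is 0). Then for all m ≥ 2: V_k^*(μ, m) = V_k^*(μ⁺, m−1) + Σ_{h=2}^{k−1} ( W_k^*(μ plus one square in row h, m−1) + W_k^*(μ minus one square in row h, m−1) ) + W_k^*(μ, m−1), where μ⁺ is μ with one square added in the first row and terms involving invalid shapes are 0. -/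
namespace Aux18

lemma shape_anti {f : ℕ → ℕ} (hf : IsShape f) {a b : ℕ} (hab : a ≤ b) : f b ≤ f a := by
  induction b, hab using Nat.le_induction with
  | base => exact le_refl _
  | succ n hn ih => exact (hf.1 n).trans ih

lemma rows_zero {f : ℕ → ℕ} (hf : IsShape f) {r j : ℕ} (hr : RowsLE r f) (hj : r ≤ j) :
    f j = 0 :=
  Nat.le_zero.mp (hr ▸ shape_anti hf hj)

lemma starTab_bound {k : ℕ} {lam : ℕ → ℕ} {m : ℕ} {t : ℕ → ℕ → ℕ}
    (ht : IsStarTab k lam m t) : ∀ i, i ≤ m → ∀ j, t i j ≤ i := by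
  intro i
  induction i with
  | zero =>
    intro _ j
    rw [ht.1]
    exact le_refl 0
  | succ n ih =>
    intro hi j
    have hn : n ≤ m := by omega
    rcases ht.2.2.1 n (by omega) with he | hadd | hrem
    · rw [he]; exact (ih hn j).trans (by omega)
    · obtain ⟨r, hr1, hr2⟩ := hadd
      by_cases hjr : j = r
      · subst hjr; rw [hr1]; have := ih hn j; omega
      · rw [hr2 j hjr]; exact (ih hn j).trans (by omega)
    · obtain ⟨r, hr1, hr2⟩ := hrem
      by_cases hjr : j = r
      · subst hjr; have := ih hn j; omega
      · rw [← hr2 j hjr]; exact (ih hn j).trans (by omega)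

lemma starTab_finite (k : ℕ) (lam : ℕ → ℕ) (m : ℕ) (P : (ℕ → ℕ → ℕ) → Prop) :
    Finite {t // IsStarTab k lam m t ∧ P t} := by
  classical
  apply Finite.of_injective
    (fun t : {t // IsStarTab k lam m t ∧ P t} =>
      fun (i : Fin (m + 1)) (j : Fin (k + 1)) =>
        (⟨t.1 i j, by
          have := starTab_bound t.2.1 i (by omega) j
          omega⟩ : Fin (m + 1)))
  intro t s h
  have key : ∀ i j, i ≤ m → j ≤ k → t.1 i j = s.1 i j := by
    intro i j hi hj
    have := congrFun (congrFun h ⟨i, by omega⟩) ⟨j, by omega⟩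
    simpa using congrArg Fin.val this
  apply Subtype.ext
  funext i j
  by_cases hi : i ≤ m
  · by_cases hj : j ≤ k
    · exact key i j hi hj
    · have h1 : t.1 i j = 0 :=
        rows_zero (t.2.1.2.2.2 i).1 (t.2.1.2.2.2 i).2 (by omega)
      have h2 : s.1 i j = 0 :=
        rows_zero (s.2.1.2.2.2 i).1 (s.2.1.2.2.2 i).2 (by omega)
      rw [h1, h2]
  · have h1 : t.1 i = lam := t.2.1.2.1 i (by omega)
    have h2 : s.1 i = lam := s.2.1.2.1 i (by omega)
    rw [h1, h2]

end Aux18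
namespace Aux18

lemma card_split {α : Type*} (P Q : α → Prop) (hfin : Finite {x // P x}) :
    Nat.card {x // P x} = Nat.card {x // P x ∧ Q x} + Nat.card {x // P x ∧ ¬ Q x} := by
  classical
  haveI := hfin
  haveI : Finite {x // P x ∧ Q x} := Finite.of_injective
    (fun y : {x // P x ∧ Q x} => (⟨y.1, y.2.1⟩ : {x // P x}))
    (by intro a b hab; simp only [Subtype.mk.injEq] at hab; exact Subtype.ext hab)
  haveI : Finite {x // P x ∧ ¬ Q x} := Finite.of_injective
    (fun y : {x // P x ∧ ¬ Q x} => (⟨y.1, y.2.1⟩ : {x // P x}))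
    (by intro a b hab; simp only [Subtype.mk.injEq] at hab; exact Subtype.ext hab)
  rw [← Nat.card_sum]
  apply Nat.card_congr
  exact ((Equiv.sumCongr (Equiv.subtypeSubtypeEquivSubtypeInter P Q).symm
    (Equiv.subtypeSubtypeEquivSubtypeInter P (fun x => ¬ Q x)).symm).trans
    (Equiv.sumCompl (fun x : {x // P x} => Q x.1))).symm

lemma nat_card_sigma {ι : Type*} [Fintype ι] (β : ι → Type*) [∀ i, Finite (β i)] :
    Nat.card (Σ i, β i) = ∑ i, Nat.card (β i) := by
  haveI := fun i => Fintype.ofFinite (β i)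
  simp [Nat.card_eq_fintype_card, Fintype.card_sigma]

lemma addRow_self (h : ℕ) (f : ℕ → ℕ) : addRow h f h = f h + 1 := by simp [addRow]
lemma addRow_other {h i : ℕ} (f : ℕ → ℕ) (hi : i ≠ h) : addRow h f i = f i := by
  simp [addRow, hi]
lemma subRow_self (h : ℕ) (f : ℕ → ℕ) : subRow h f h = f h - 1 := by simp [subRow]
lemma subRow_other {h i : ℕ} (f : ℕ → ℕ) (hi : i ≠ h) : subRow h f i = f i := by
  simp [subRow, hi]

lemma addSquareAt_addRow (h : ℕ) (f : ℕ → ℕ) : AddSquareAt h f (addRow h f) :=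
  ⟨addRow_self h f, fun i hi => addRow_other f hi⟩

lemma addSquareAt_subRow {h : ℕ} {f : ℕ → ℕ} (hpos : 0 < f h) :
    AddSquareAt h (subRow h f) f :=
  ⟨by rw [subRow_self]; omega, fun i hi => (subRow_other f hi).symm⟩

lemma eq_addRow_of_addSquareAt {j : ℕ} {f g : ℕ → ℕ} (h : AddSquareAt j f g) :
    g = addRow j f := by
  funext i
  by_cases hi : i = j
  · subst hi; rw [h.1, addRow_self]
  · rw [h.2 i hi, addRow_other f hi]

lemma eq_subRow_of_addSquareAt {j : ℕ} {f g : ℕ → ℕ} (h : AddSquareAt j f g) :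
    f = subRow j g ∧ 0 < g j := by
  constructor
  · funext i
    by_cases hi : i = j
    · subst hi; rw [subRow_self, h.1]; omega
    · rw [← h.2 i hi, subRow_other g hi]
  · have := h.1; omega

lemma addRow_ne_self (j : ℕ) (f : ℕ → ℕ) : addRow j f ≠ f := fun h => by
  have := congrFun h j; rw [addRow_self] at this; omega

lemma subRow_ne_addRow {a b : ℕ} {f : ℕ → ℕ} (ha : 0 < f a) :
    subRow a f ≠ addRow b f := fun h => by
  have := congrFun h b
  rw [addRow_self] at this
  by_cases hab : b = a
  · subst hab; rw [subRow_self] at this; omega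
  · rw [subRow_other f hab] at this; omega

lemma addRow_inj {a b : ℕ} {f : ℕ → ℕ} (h : addRow a f = addRow b f) : a = b := by
  by_contra hab
  have := congrFun h a
  rw [addRow_self, addRow_other f hab] at this
  omega

lemma subRow_inj {a b : ℕ} {f : ℕ → ℕ} (ha : 0 < f a) (h : subRow a f = subRow b f) :
    a = b := by
  by_contra hab
  have := congrFun h a
  rw [subRow_self, subRow_other f hab] at this
  omega

lemma subRow_ne_self {a : ℕ} {f : ℕ → ℕ} (ha : 0 < f a) : subRow a f ≠ f := fun h => by
  have := congrFun h a; rw [subRow_self] at this; omega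

lemma subRow_addRow (f : ℕ → ℕ) : subRow 0 (addRow 0 f) = f := by
  funext i
  by_cases hi : i = 0
  · subst hi; rw [subRow_self, addRow_self]; omega
  · rw [subRow_other _ hi, addRow_other f hi]

lemma isShape_addRow0 {f : ℕ → ℕ} (hf : IsShape f) : IsShape (addRow 0 f) := by
  constructor
  · intro i
    rcases Nat.eq_zero_or_pos i with hi | hi
    · subst hi
      rw [addRow_self, addRow_other f (by omega)]
      exact (hf.1 0).trans (by omega)
    · rw [addRow_other f (by omega), addRow_other f (by omega)]
      exact hf.1 i
  · obtain ⟨N, hN⟩ := hf.2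
    refine ⟨N + 1, ?_⟩
    rw [addRow_other f (by omega)]
    exact Nat.le_zero.mp (hN ▸ hf.1 N)

lemma rowsLE_addRow0 {k : ℕ} {f : ℕ → ℕ} (hk : 2 ≤ k) (hr : RowsLE (k - 1) f) :
    RowsLE (k - 1) (addRow 0 f) := by
  unfold RowsLE at *
  rw [addRow_other f (by omega)]
  exact hr

lemma starStep_cases {k : ℕ} {ν μ : ℕ → ℕ} (hν : IsShape ν) (hνr : RowsLE (k - 1) ν)
    (hμ : IsShape μ) (hμr : RowsLE (k - 1) μ) (hst : StarStep ν μ) :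
    ν = μ ∨ (∃ j, j < k - 1 ∧ 0 < μ j ∧ ν = subRow j μ) ∨
      (∃ j, j < k - 1 ∧ ν = addRow j μ) := by
  rcases hst with he | hadd | hrem
  · exact Or.inl he.symm
  · obtain ⟨j, hj⟩ := hadd
    obtain ⟨hsub, hpos⟩ := eq_subRow_of_addSquareAt hj
    have hjk : j < k - 1 := by
      by_contra hjk
      have := rows_zero hμ hμr (le_of_not_gt hjk)
      omega
    exact Or.inr (Or.inl ⟨j, hjk, hpos, hsub⟩)
  · obtain ⟨j, hj⟩ := hrem
    have hνa := eq_addRow_of_addSquareAt hj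
    have hpos : 0 < ν j := by have := hj.1; omega
    have hjk : j < k - 1 := by
      by_contra hjk
      have := rows_zero hν hνr (le_of_not_gt hjk)
      omega
    exact Or.inr (Or.inr ⟨j, hjk, hνa⟩)

end Aux18
namespace Aux18

lemma card_fiber (k m : ℕ) (hm : 1 ≤ m) (σ ρ : ℕ → ℕ)
    (hσ : IsShape σ) (hσr : RowsLE (k - 1) σ) (hst : StarStep ρ σ) :
    Nat.card {t : ℕ → ℕ → ℕ //
        (IsStarTab k σ m t ∧ ∀ i, ¬ PairAt m t i) ∧ t (m - 1) = ρ}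
      = Nat.card {t : ℕ → ℕ → ℕ //
        (IsStarTab k ρ (m - 1) t ∧ ∀ i, ¬ PairAt (m - 1) t i) ∧
          ¬ (2 ≤ m ∧ t (m - 2) = σ ∧ AddSquareAt 0 σ ρ)} := by
  apply Nat.card_congr
  refine Equiv.mk
    (fun t => ⟨fun i => if i < m - 1 then t.1 i else ρ, ?_⟩)
    (fun t => ⟨fun i => if i < m then t.1 i else σ, ?_⟩) ?_ ?_
  · -- forward membership
    obtain ⟨u, ⟨⟨ht0, htpad, htstep, htsh⟩, htpf⟩, htlast⟩ := t
    refine ⟨⟨⟨?_, ?_, ?_, ?_⟩, ?_⟩, ?_⟩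
    · show (if 0 < m - 1 then u 0 else ρ) = emptyShape
      by_cases h0 : 0 < m - 1
      · rw [if_pos h0]; exact ht0
      · rw [if_neg h0, ← htlast]
        have h1 : m - 1 = 0 := by omega
        rw [h1]; exact ht0
    · intro i hi
      show (if i < m - 1 then u i else ρ) = ρ
      rw [if_neg (by omega)]
    · intro i hi
      show StarStep (if i < m - 1 then u i else ρ)
        (if i + 1 < m - 1 then u (i + 1) else ρ)
      rw [if_pos hi]
      by_cases h1 : i + 1 < m - 1
      · rw [if_pos h1]; exact htstep i (by omega)
      · rw [if_neg h1, ← htlast]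
        have h2 : m - 1 = i + 1 := by omega
        rw [h2]; exact htstep i (by omega)
    · intro i
      show IsShape (if i < m - 1 then u i else ρ) ∧
        RowsLE (k - 1) (if i < m - 1 then u i else ρ)
      by_cases hi : i < m - 1
      · rw [if_pos hi]; exact htsh i
      · rw [if_neg hi, ← htlast]; exact htsh (m - 1)
    · -- pairfree
      intro i hp
      have hp2 : i + 2 ≤ m - 1 := hp.1
      have hadd : AddSquareAt 0 (if i < m - 1 then u i else ρ)
          (if i + 1 < m - 1 then u (i + 1) else ρ) := hp.2.1
      have heq : (if i + 2 < m - 1 then u (i + 2) else ρ)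
          = (if i < m - 1 then u i else ρ) := hp.2.2
      rw [if_pos (show i < m - 1 by omega), if_pos (show i + 1 < m - 1 by omega)] at hadd
      have e2 : (if i + 2 < m - 1 then u (i + 2) else ρ) = u (i + 2) := by
        by_cases h' : i + 2 < m - 1
        · exact if_pos h'
        · have h'' : i + 2 = m - 1 := by omega
          rw [if_neg h', h'', htlast]
      rw [e2, if_pos (show i < m - 1 by omega)] at heq
      exact htpf i ⟨by omega, hadd, heq⟩
    · -- no dangerous end
      rintro ⟨hm2, he, ha⟩
      have he' : (if m - 2 < m - 1 then u (m - 2) else ρ) = σ := he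
      rw [if_pos (show m - 2 < m - 1 by omega)] at he'
      apply htpf (m - 2)
      refine ⟨by omega, ?_, ?_⟩
      · have h21 : m - 2 + 1 = m - 1 := by omega
        rw [h21, he', htlast]; exact ha
      · have hm' : m - 2 + 2 = m := by omega
        rw [hm', htpad m (le_refl m)]
        exact he'.symm
  · -- backward membership
    obtain ⟨u, ⟨⟨h0, hpad, hstep, hsh⟩, hpf⟩, hnp⟩ := t
    refine ⟨⟨⟨?_, ?_, ?_, ?_⟩, ?_⟩, ?_⟩
    · show (if 0 < m then u 0 else σ) = emptyShape
      rw [if_pos (by omega)]; exact h0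
    · intro i hi
      show (if i < m then u i else σ) = σ
      rw [if_neg (by omega)]
    · intro i hi
      show StarStep (if i < m then u i else σ) (if i + 1 < m then u (i + 1) else σ)
      rw [if_pos hi]
      by_cases h1 : i + 1 < m
      · rw [if_pos h1]; exact hstep i (by omega)
      · rw [if_neg h1]
        have h2 : u i = ρ := hpad i (by omega)
        rw [h2]; exact hst
    · intro i
      show IsShape (if i < m then u i else σ) ∧
        RowsLE (k - 1) (if i < m then u i else σ)
      by_cases hi : i < m
      · rw [if_pos hi]; exact hsh i
      · rw [if_neg hi]; exact ⟨hσ, hσr⟩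
    · -- pairfree of extension
      intro i hp
      have hp2 : i + 2 ≤ m := hp.1
      have hadd : AddSquareAt 0 (if i < m then u i else σ)
          (if i + 1 < m then u (i + 1) else σ) := hp.2.1
      have heq : (if i + 2 < m then u (i + 2) else σ)
          = (if i < m then u i else σ) := hp.2.2
      rw [if_pos (show i < m by omega), if_pos (show i + 1 < m by omega)] at hadd
      by_cases hc : i + 2 < m
      · rw [if_pos hc, if_pos (by omega)] at heq
        exact hpf i ⟨by omega, hadd, heq⟩
      · rw [if_neg hc, if_pos (by omega)] at heq
        apply hnp
        refine ⟨by omega, ?_, ?_⟩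
        · have h3 : m - 2 = i := by omega
          rw [h3]; exact heq.symm
        · have h1 : u (i + 1) = ρ := hpad (i + 1) (by omega)
          rw [heq, ← h1]; exact hadd
    · show (if m - 1 < m then u (m - 1) else σ) = ρ
      rw [if_pos (by omega)]
      exact hpad (m - 1) (le_refl _)
  · -- left inverse
    rintro ⟨u, ⟨⟨ht0, htpad, _, _⟩, _⟩, htlast⟩
    apply Subtype.ext
    funext i
    show (if i < m then (if i < m - 1 then u i else ρ) else σ) = u i
    by_cases h1 : i < m - 1
    · rw [if_pos (by omega), if_pos h1]
    · by_cases h2 : i < m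
      · have h3 : i = m - 1 := by omega
        rw [if_pos h2, if_neg h1, h3, htlast]
      · rw [if_neg h2, htpad i (by omega)]
  · -- right inverse
    rintro ⟨u, ⟨⟨h0, hpad, _, _⟩, _⟩, hnp⟩
    apply Subtype.ext
    funext i
    show (if i < m - 1 then (if i < m then u i else σ) else ρ) = u i
    by_cases h1 : i < m - 1
    · rw [if_pos h1, if_pos (by omega)]
    · rw [if_neg h1]
      exact (hpad i (by omega)).symm

end Aux18
namespace Aux18

lemma starTab_finite' (k : ℕ) (lam : ℕ → ℕ) (m : ℕ) (P : (ℕ → ℕ → ℕ) → Prop)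
    (h : ∀ t, P t → IsStarTab k lam m t) : Finite {t // P t} := by
  haveI := starTab_finite k lam m (fun _ => True)
  apply Finite.of_injective
    (fun x : {t // P t} => (⟨x.1, h x.1 x.2, trivial⟩ : {t // IsStarTab k lam m t ∧ True}))
  intro a b hab
  simp only [Subtype.mk.injEq] at hab
  exact Subtype.ext hab

lemma Wstar_decomp (k : ℕ) (hk : 3 ≤ k) (mu : ℕ → ℕ) (m : ℕ) (hm : 1 ≤ m) :
    Wstar k mu m
      = (∑ h : Fin (k - 1), Nat.card {t : ℕ → ℕ → ℕ //
            (IsStarTab k mu m t ∧ ∀ i, ¬ PairAt m t i) ∧ t (m - 1) = addRow ↑h mu})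
        + (∑ h : Fin (k - 1), Nat.card {t : ℕ → ℕ → ℕ //
            (IsStarTab k mu m t ∧ ∀ i, ¬ PairAt m t i) ∧
              0 < mu ↑h ∧ t (m - 1) = subRow ↑h mu})
        + Nat.card {t : ℕ → ℕ → ℕ //
            (IsStarTab k mu m t ∧ ∀ i, ¬ PairAt m t i) ∧ t (m - 1) = mu} := by
  classical
  set P : (ℕ → ℕ → ℕ) → Prop :=
    fun t => IsStarTab k mu m t ∧ ∀ i, ¬ PairAt m t i with hP
  set β : (Fin (k - 1) ⊕ (Fin (k - 1) ⊕ Unit)) → Type :=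
    fun i => Sum.elim
      (fun h : Fin (k - 1) => {t : ℕ → ℕ → ℕ // P t ∧ t (m - 1) = addRow ↑h mu})
      (Sum.elim
        (fun h : Fin (k - 1) =>
          {t : ℕ → ℕ → ℕ // P t ∧ 0 < mu ↑h ∧ t (m - 1) = subRow ↑h mu})
        (fun _ : Unit => {t : ℕ → ℕ → ℕ // P t ∧ t (m - 1) = mu})) i with hβ
  haveI : ∀ i, Finite (β i) := by
    rintro (h | h | u) <;>
      exact starTab_finite' k mu m _ (fun t ht => ht.1.1)
  have key : Nat.card {t // P t} = Nat.card (Σ i, β i) := by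
    apply Nat.card_congr
    symm
    apply Equiv.ofBijective
      (fun x : Σ i, β i =>
        match x with
        | ⟨Sum.inl _, y⟩ => (⟨y.1, y.2.1⟩ : {t // P t})
        | ⟨Sum.inr (Sum.inl _), y⟩ => ⟨y.1, y.2.1⟩
        | ⟨Sum.inr (Sum.inr _), y⟩ => ⟨y.1, y.2.1⟩)
    constructor
    · rintro ⟨(h | h | u), y⟩ ⟨(h' | h' | u'), y'⟩ hxy <;>
        simp only [Subtype.mk.injEq] at hxy
      · -- inl inl
        have hh : (h : ℕ) = (h' : ℕ) := by
          apply addRow_inj (f := mu)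
          rw [← y.2.2, hxy, y'.2.2]
        have : h = h' := Fin.ext hh
        subst this
        have : y = y' := Subtype.ext hxy
        rw [this]
      · exfalso
        apply subRow_ne_addRow (f := mu) y'.2.2.1
        rw [← y'.2.2.2, ← hxy, y.2.2]
      · exfalso
        apply addRow_ne_self (↑h) mu
        rw [← y.2.2, hxy, y'.2.2]
      · exfalso
        apply subRow_ne_addRow (f := mu) y.2.2.1
        rw [← y.2.2.2, hxy, y'.2.2]
      · have hh : (h : ℕ) = (h' : ℕ) := by
          apply subRow_inj (f := mu) y.2.2.1
          rw [← y.2.2.2, hxy, y'.2.2.2]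
        have : h = h' := Fin.ext hh
        subst this
        have : y = y' := Subtype.ext hxy
        rw [this]
      · exfalso
        apply subRow_ne_self (f := mu) y.2.2.1
        rw [← y.2.2.2, hxy, y'.2.2]
      · exfalso
        apply addRow_ne_self (↑h') mu
        rw [← y'.2.2, ← hxy, y.2.2]
      · exfalso
        apply subRow_ne_self (f := mu) y'.2.2.1
        rw [← y'.2.2.2, ← hxy, y.2.2]
      · have hu : u = u' := rfl
        subst hu
        have : y = y' := Subtype.ext hxy
        rw [this]
    · rintro ⟨t, ht⟩
      have hstep : StarStep (t (m - 1)) (t m) := by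
        have := ht.1.2.2.1 (m - 1) (by omega)
        have hm1 : m - 1 + 1 = m := by omega
        rwa [hm1] at this
      have hmm : t m = mu := ht.1.2.1 m (le_refl m)
      rw [hmm] at hstep
      have hsh := ht.1.2.2.2 (m - 1)
      have hmush := ht.1.2.2.2 m
      rw [hmm] at hmush
      rcases starStep_cases hsh.1 hsh.2 hmush.1 hmush.2 hstep with
        hcase | ⟨j, hj, hpos, hcase⟩ | ⟨j, hj, hcase⟩
      · exact ⟨⟨Sum.inr (Sum.inr ()), ⟨t, ht, hcase⟩⟩, rfl⟩
      · exact ⟨⟨Sum.inr (Sum.inl ⟨j, hj⟩), ⟨t, ht, hpos, hcase⟩⟩, rfl⟩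
      · exact ⟨⟨Sum.inl ⟨j, hj⟩, ⟨t, ht, hcase⟩⟩, rfl⟩
  have hW : Wstar k mu m = Nat.card {t // P t} := rfl
  rw [hW, key, nat_card_sigma, Fintype.sum_sum_type, Fintype.sum_sum_type, add_assoc]
  congr 1

end Aux18
namespace Aux18

lemma notAdd0_self (f : ℕ → ℕ) : ¬ AddSquareAt 0 f f := fun ha => by
  have := ha.1; omega

lemma notAdd0_addRow {f : ℕ → ℕ} {h : ℕ} (hh : h ≠ 0) :
    ¬ AddSquareAt 0 f (addRow h f) := fun ha => by
  have := ha.1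
  rw [addRow_other f (Ne.symm hh)] at this
  omega

lemma notAdd0_subRow (f : ℕ → ℕ) (h : ℕ) : ¬ AddSquareAt 0 f (subRow h f) := fun ha => by
  have := ha.1
  by_cases h0 : (0 : ℕ) = h
  · rw [← h0] at this; rw [subRow_self] at this; omega
  · rw [subRow_other f h0] at this; omega

lemma notAdd0_down (f : ℕ → ℕ) : ¬ AddSquareAt 0 (addRow 0 f) f := fun ha => by
  have := ha.1
  rw [addRow_self] at this
  omega

lemma card_fiber' (k m : ℕ) (hm : 1 ≤ m) (σ ρ : ℕ → ℕ)
    (hσ : IsShape σ) (hσr : RowsLE (k - 1) σ) (hst : StarStep ρ σ)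
    (hnd : ¬ AddSquareAt 0 σ ρ) :
    Nat.card {t : ℕ → ℕ → ℕ //
        (IsStarTab k σ m t ∧ ∀ i, ¬ PairAt m t i) ∧ t (m - 1) = ρ}
      = Wstar k ρ (m - 1) := by
  rw [card_fiber k m hm σ ρ hσ hσr hst]
  apply Nat.card_congr
  apply Equiv.subtypeEquivRight
  intro t
  constructor
  · rintro ⟨hP, _⟩; exact hP
  · rintro hP; exact ⟨hP, fun hc => hnd hc.2.2⟩

lemma Wstar_rec_nat (k : ℕ) (hk : 3 ≤ k) (mu : ℕ → ℕ) (hmu : IsShape mu)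
    (hr : RowsLE (k - 1) mu) (m : ℕ) (hm : 2 ≤ m) :
    Wstar k mu m + Wstar k mu (m - 2)
      = Wstar k (addRow 0 mu) (m - 1)
        + (∑ h ∈ Finset.Ico 1 (k - 1),
            (Wstar k (addRow h mu) (m - 1)
              + if 0 < mu h then Wstar k (subRow h mu) (m - 1) else 0))
        + (if 0 < mu 0 then Wstar k (subRow 0 mu) (m - 1) else 0)
        + Wstar k mu (m - 1) := by
  have hm1 : 1 ≤ m := by omega
  have hm1' : 1 ≤ m - 1 := by omega
  have hk2 : 2 ≤ k := by omega
  have hk1 : 0 < k - 1 := by omega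
  have hmm : m - 1 - 1 = m - 2 := by omega
  rw [Wstar_decomp k hk mu m hm1]
  -- the "do nothing" fiber
  have hC : Nat.card {t : ℕ → ℕ → ℕ //
      (IsStarTab k mu m t ∧ ∀ i, ¬ PairAt m t i) ∧ t (m - 1) = mu}
        = Wstar k mu (m - 1) :=
    card_fiber' k m hm1 mu mu hmu hr (Or.inl rfl) (notAdd0_self mu)
  -- the subRow fibers
  have hB : ∀ h : ℕ, Nat.card {t : ℕ → ℕ → ℕ //
      (IsStarTab k mu m t ∧ ∀ i, ¬ PairAt m t i) ∧
        0 < mu h ∧ t (m - 1) = subRow h mu}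
      = if 0 < mu h then Wstar k (subRow h mu) (m - 1) else 0 := by
    intro h
    by_cases hpos : 0 < mu h
    · rw [if_pos hpos,
        ← card_fiber' k m hm1 mu (subRow h mu) hmu hr
          (Or.inr (Or.inl ⟨h, addSquareAt_subRow hpos⟩)) (notAdd0_subRow mu h)]
      apply Nat.card_congr
      apply Equiv.subtypeEquivRight
      intro t
      simp [hpos]
    · rw [if_neg hpos]
      haveI : IsEmpty {t : ℕ → ℕ → ℕ //
          (IsStarTab k mu m t ∧ ∀ i, ¬ PairAt m t i) ∧
            0 < mu h ∧ t (m - 1) = subRow h mu} := ⟨fun t => hpos t.2.2.1⟩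
      exact Nat.card_of_isEmpty
  -- the addRow fibers, h ≠ 0
  have hA : ∀ h : ℕ, h ≠ 0 → Nat.card {t : ℕ → ℕ → ℕ //
      (IsStarTab k mu m t ∧ ∀ i, ¬ PairAt m t i) ∧ t (m - 1) = addRow h mu}
      = Wstar k (addRow h mu) (m - 1) := fun h hh =>
    card_fiber' k m hm1 mu (addRow h mu) hmu hr
      (Or.inr (Or.inr ⟨h, addSquareAt_addRow h mu⟩)) (notAdd0_addRow hh)
  -- the addRow 0 fiber
  have hA0 : Nat.card {t : ℕ → ℕ → ℕ //
      (IsStarTab k mu m t ∧ ∀ i, ¬ PairAt m t i) ∧ t (m - 1) = addRow 0 mu}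
      = Nat.card {t : ℕ → ℕ → ℕ //
        (IsStarTab k (addRow 0 mu) (m - 1) t ∧ ∀ i, ¬ PairAt (m - 1) t i) ∧
          t (m - 2) ≠ mu} := by
    rw [card_fiber k m hm1 mu (addRow 0 mu) hmu hr
      (Or.inr (Or.inr ⟨0, addSquareAt_addRow 0 mu⟩))]
    apply Nat.card_congr
    apply Equiv.subtypeEquivRight
    intro t
    constructor
    · rintro ⟨hP, hnd⟩
      exact ⟨hP, fun he => hnd ⟨hm, he, addSquareAt_addRow 0 mu⟩⟩
    · rintro ⟨hP, hne⟩
      exact ⟨hP, fun hc => hne hc.2.1⟩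
  have hX : Wstar k (addRow 0 mu) (m - 1)
      = Wstar k mu (m - 2)
        + Nat.card {t : ℕ → ℕ → ℕ //
          (IsStarTab k (addRow 0 mu) (m - 1) t ∧ ∀ i, ¬ PairAt (m - 1) t i) ∧
            t (m - 2) ≠ mu} := by
    have hsplit := card_split
      (fun t : ℕ → ℕ → ℕ =>
        IsStarTab k (addRow 0 mu) (m - 1) t ∧ ∀ i, ¬ PairAt (m - 1) t i)
      (fun t => t (m - 2) = mu)
      (starTab_finite' k (addRow 0 mu) (m - 1) _ (fun t ht => ht.1))
    have h2 : Nat.card {t : ℕ → ℕ → ℕ //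
        (IsStarTab k (addRow 0 mu) (m - 1) t ∧ ∀ i, ¬ PairAt (m - 1) t i) ∧
          t (m - 2) = mu} = Wstar k mu (m - 2) := by
      have := card_fiber' k (m - 1) hm1' (addRow 0 mu) mu
        (isShape_addRow0 hmu) (rowsLE_addRow0 hk2 hr)
        (Or.inr (Or.inl ⟨0, addSquareAt_addRow 0 mu⟩)) (notAdd0_down mu)
      rw [hmm] at this
      exact this
    rw [h2] at hsplit
    exact hsplit
  -- turn Fin sums into range sums
  rw [Fin.sum_univ_eq_sum_range (fun j => Nat.card {t : ℕ → ℕ → ℕ //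
      (IsStarTab k mu m t ∧ ∀ i, ¬ PairAt m t i) ∧ t (m - 1) = addRow j mu}) (k - 1)]
  rw [Fin.sum_univ_eq_sum_range (fun j => Nat.card {t : ℕ → ℕ → ℕ //
      (IsStarTab k mu m t ∧ ∀ i, ¬ PairAt m t i) ∧
        0 < mu j ∧ t (m - 1) = subRow j mu}) (k - 1)]
  rw [Finset.range_eq_Ico,
    Finset.sum_eq_sum_Ico_succ_bot hk1,
    Finset.sum_eq_sum_Ico_succ_bot hk1]
  rw [hC, hA0, hB 0]
  rw [Finset.sum_congr rfl (fun h hh => hA h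
    (Nat.one_le_iff_ne_zero.mp (Finset.mem_Ico.mp hh).1))]
  rw [Finset.sum_congr rfl (fun h hh => hB h)]
  rw [hX, Finset.sum_add_distrib]
  ring
end Aux18

open Aux18

/-- with `μ = λ` plus one square in the first row,
`V_k^*(μ, m) = V_k^*(μ⁺, m−1) + Σ_{h=2}^{k−1} (W_k^*(μ₊ₕ, m−1) + W_k^*(μ₋ₕ, m−1)) +
W_k^*(μ, m−1)`, where `μ⁺` is `μ` plus one square in the first row, `μ₊ₕ` (resp. `μ₋ₕ`) is `μ`
plus (resp. minus) one square in row `h`, and terms involving invalid shapes are `0`. -/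
theorem Vstar_rec (k : ℕ) (hk : 3 ≤ k) (lam : ℕ → ℕ) (hlam : IsShape lam)
    (hrow : RowsLE (k - 1) lam) (m : ℕ) (hm : 2 ≤ m) :
    Vstar k (addRow 0 lam) m =
      Vstar k (addRow 0 (addRow 0 lam)) (m - 1)
        + (∑ h ∈ Finset.Icc 2 (k - 1),
            ((Wstar k (addRow (h - 1) (addRow 0 lam)) (m - 1) : ℤ)
              + if 0 < (addRow 0 lam) (h - 1) then
                  (Wstar k (subRow (h - 1) (addRow 0 lam)) (m - 1) : ℤ)
                else 0))
        + (Wstar k (addRow 0 lam) (m - 1) : ℤ) := by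
  have hk2 : 2 ≤ k := by omega
  have hmu : IsShape (addRow 0 lam) := isShape_addRow0 hlam
  have hrmu : RowsLE (k - 1) (addRow 0 lam) := rowsLE_addRow0 hk2 hrow
  have hmu0 : 0 < (addRow 0 lam) 0 := by rw [addRow_self]; omega
  have hmu0' : 0 < (addRow 0 (addRow 0 lam)) 0 := by rw [addRow_self]; omega
  have hmm : m - 1 - 1 = m - 2 := by omega
  -- the recursion at the level of natural numbers
  have hE := Wstar_rec_nat k hk (addRow 0 lam) hmu hrmu m hm
  rw [if_pos hmu0, subRow_addRow lam] at hE
  have hEz := congrArg (fun n : ℕ => (n : ℤ)) hE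
  simp only [Nat.cast_add, Nat.cast_sum, apply_ite (fun n : ℕ => (n : ℤ)),
    Nat.cast_zero] at hEz
  -- reindex the sum in the goal
  have hsum : (∑ h ∈ Finset.Icc 2 (k - 1),
      ((Wstar k (addRow (h - 1) (addRow 0 lam)) (m - 1) : ℤ)
        + if 0 < (addRow 0 lam) (h - 1) then
            (Wstar k (subRow (h - 1) (addRow 0 lam)) (m - 1) : ℤ)
          else 0))
      = ∑ h ∈ Finset.Ico 1 (k - 1),
          ((Wstar k (addRow h (addRow 0 lam)) (m - 1) : ℤ)
            + if 0 < (addRow 0 lam) h then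
                (Wstar k (subRow h (addRow 0 lam)) (m - 1) : ℤ)
              else 0) := by
    apply Finset.sum_nbij' (fun h => h - 1) (fun h => h + 1)
    · intro a ha
      have := Finset.mem_Icc.mp ha
      exact Finset.mem_Ico.mpr (by omega)
    · intro a ha
      have := Finset.mem_Ico.mp ha
      exact Finset.mem_Icc.mpr (by omega)
    · intro a ha
      have := Finset.mem_Icc.mp ha
      omega
    · intro a ha
      have := Finset.mem_Ico.mp ha
      omega
    · intro a ha
      rfl
  rw [hsum]
  show (Wstar k (addRow 0 lam) m : ℤ)
      - (if 0 < (addRow 0 lam) 0 then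
          (Wstar k (subRow 0 (addRow 0 lam)) (m - 1) : ℤ) else 0)
    = ((Wstar k (addRow 0 (addRow 0 lam)) (m - 1) : ℤ)
        - (if 0 < (addRow 0 (addRow 0 lam)) 0 then
            (Wstar k (subRow 0 (addRow 0 (addRow 0 lam))) (m - 1 - 1) : ℤ) else 0))
      + _ + (Wstar k (addRow 0 lam) (m - 1) : ℤ)
  rw [if_pos hmu0, if_pos hmu0', subRow_addRow lam, subRow_addRow (addRow 0 lam), hmm]
  linarith [hEz]
end
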